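/- The unnormalized conditional marginals satisfy P(Y_i = 1 | C) = (∑_m F_{i-1}(m)·π_i·B_i(m+1)) / P(C) and P(Y_i = 0 | C) = (∑_m F_{i-1}(m)·(1-π_i)·B_i(m)) / P(C), where C = {Z_n = n_1}. -/

import Mathlib

open scoped Classical
open Finset

/-- Product Bernoulli weight of a configuration: individual `i+1` (1-based) has
probability `π (i+1)` of being a case (`true`). -/
noncomputable def wgt (n : ℕ) (π : ℕ → ℝ) (y : Fin n → Bool) : ℝ :=
  ∏ i : Fin n, if y i then π (i.1 + 1) else 1 - π (i.1 + 1)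

/-- Probability of an event under the product Bernoulli law. -/
noncomputable def prb (n : ℕ) (π : ℕ → ℝ) (E : (Fin n → Bool) → Prop) : ℝ :=
  ∑ y : Fin n → Bool, if E y then wgt n π y else 0

/-- Partial sum `Z_j = Y_1 + ... + Y_j`. -/
def zsum (n : ℕ) (y : Fin n → Bool) (j : ℕ) : ℤ :=
  ((Finset.univ.filter (fun i : Fin n => i.1 < j ∧ y i)).card : ℤ)

/-- Tail sum `Y_{i+1} + ... + Y_n`. -/
def tcnt (n : ℕ) (y : Fin n → Bool) (i : ℕ) : ℤ :=
  ((Finset.univ.filter (fun k : Fin n => i ≤ k.1 ∧ y k)).card : ℤ)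

/-- Forward quantity `F_i(m) = P(Z_i = m)`. -/
noncomputable def fwd (n : ℕ) (π : ℕ → ℝ) (i : ℕ) (m : ℤ) : ℝ :=
  prb n π (fun y => zsum n y i = m)

/-- Backward quantity `B_i(m) = P(Y_{i+1} + ... + Y_n = n1 - m)`. -/
noncomputable def bwd (n : ℕ) (π : ℕ → ℝ) (n1 : ℤ) (i : ℕ) (m : ℤ) : ℝ :=
  prb n π (fun y => tcnt n y i = n1 - m)

/-!
Split the event `{Y_i = b, Z_n = n₁}` according to the value `m` of `Z_{i-1}`. Since
`Z_n = Z_{i-1} + Y_i + (Y_{i+1} + ⋯ + Y_n)`, each piece is the intersection of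
`{Z_{i-1} = m}`, `{Y_i = b}` and `{Y_{i+1} + ⋯ + Y_n = n₁ - m - b}`. These events depend on
disjoint blocks of coordinates, so under the product law the probability of the piece is
`F_{i-1}(m) · P(Y_i = b) · B_i(m + b)`.
-/

section ProductMass

variable {ι α : Type*} [Fintype ι] [DecidableEq ι] [Fintype α]

noncomputable def productMass (w : ι → α → ℝ) (E : (ι → α) → Prop) : ℝ :=
  ∑ y, if E y then ∏ k, w k (y k) else 0

variable {w : ι → α → ℝ}

theorem productMass_congr {E E' : (ι → α) → Prop} (h : ∀ y, E y ↔ E' y) :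
    productMass w E = productMass w E' := by
  rw [show E = E' from funext fun y => propext (h y)]

theorem sum_prod_eq_one (hw : ∀ k, ∑ a, w k a = 1) : ∑ y : ι → α, ∏ k, w k (y k) = 1 := by
  simp [← Fintype.prod_sum, hw]

theorem productMass_eval_eq (hw : ∀ k, ∑ a, w k a = 1) (j : ι) (a : α) :
    productMass w (fun y => y j = a) = w j a := by
  let g : ι → α → ℝ := fun k c => if k = j ∧ c ≠ a then 0 else w k c
  have hg : ∀ y : ι → α, (if y j = a then ∏ k, w k (y k) else 0) = ∏ k, g k (y k) := by
    intro y
    by_cases hy : y j = a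
    · rw [if_pos hy]
      exact Finset.prod_congr rfl fun k _ => by by_cases hk : k = j <;> simp [g, hk, hy]
    · rw [if_neg hy, Finset.prod_eq_zero (Finset.mem_univ j) (by simp [g, hy])]
  rw [productMass, Fintype.sum_congr _ _ hg, ← Fintype.prod_sum,
    Finset.prod_eq_single j (fun k _ hk => by simp [g, hk, hw]) (by simp)]
  simp [g]

theorem productMass_eq_sum_fiber {β : Type*} (f : (ι → α) → β) {t : Finset β}
    (hf : ∀ y, f y ∈ t) (E : (ι → α) → Prop) :
    productMass w E = ∑ m ∈ t, productMass w (fun y => f y = m ∧ E y) := by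
  unfold productMass
  rw [Finset.sum_comm]
  refine Fintype.sum_congr _ _ fun y => ?_
  rw [Finset.sum_eq_single_of_mem (f y) (hf y)]
  · simp only [true_and]
  · exact fun m _ hm => if_neg fun h => hm h.1.symm

theorem productMass_eq_sum_sum (s : Set ι) [DecidablePred (· ∈ s)] (E : (ι → α) → Prop) :
    productMass w E = ∑ a : {k // k ∈ s} → α, ∑ b : {k // k ∉ s} → α,
      if E ((Equiv.piEquivPiSubtypeProd (· ∈ s) _).symm (a, b))
      then (∏ k, w k.1 (a k)) * ∏ k, w k.1 (b k) else 0 := by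
  rw [productMass, ← Equiv.sum_comp (Equiv.piEquivPiSubtypeProd (· ∈ s) _).symm,
    Fintype.sum_prod_type]
  refine Fintype.sum_congr _ _ fun a => Fintype.sum_congr _ _ fun b => ?_
  rw [← Fintype.prod_subtype_mul_prod_subtype (· ∈ s)]
  congr 2
  · exact Fintype.prod_congr _ _ fun k => by simp
  · exact Fintype.prod_congr _ _ fun k => by simp [dif_neg k.2]

theorem productMass_and_of_dependsOn (hw : ∀ k, ∑ a, w k a = 1) {s : Set ι}
    {E₁ E₂ : (ι → α) → Prop} (h₁ : DependsOn E₁ s) (h₂ : DependsOn E₂ sᶜ) :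
    productMass w (fun y => E₁ y ∧ E₂ y) = productMass w E₁ * productMass w E₂ := by
  classical
  simp only [productMass_eq_sum_sum s]
  set e := (Equiv.piEquivPiSubtypeProd (· ∈ s) fun _ => α).symm
  set P : ({k // k ∈ s} → α) → ℝ := fun a => ∏ k, w k.1 (a k)
  set Q : ({k // k ∉ s} → α) → ℝ := fun b => ∏ k, w k.1 (b k)
  -- `E₁ (e (a, b))` does not depend on `b`, and `E₂ (e (a, b))` does not depend on `a`.
  obtain ⟨R, hR⟩ : ∃ R : ({k // k ∈ s} → α) → Prop, ∀ a b, E₁ (e (a, b)) ↔ R a :=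
    ⟨fun a => ∃ b, E₁ (e (a, b)), fun a b => ⟨fun h => ⟨b, h⟩, fun ⟨b', h⟩ =>
      (@h₁ (e (a, b')) (e (a, b)) fun k (hk : k ∈ s) => by simp [e, hk]) ▸ h⟩⟩
  obtain ⟨S, hS⟩ : ∃ S : ({k // k ∉ s} → α) → Prop, ∀ a b, E₂ (e (a, b)) ↔ S b :=
    ⟨fun b => ∃ a, E₂ (e (a, b)), fun a b => ⟨fun h => ⟨a, h⟩, fun ⟨a', h⟩ =>
      (@h₂ (e (a', b)) (e (a, b)) fun k (hk : k ∉ s) => by simp [e, hk]) ▸ h⟩⟩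
  have hP : ∑ a, P a = 1 := sum_prod_eq_one (w := fun k : {k // k ∈ s} => w k) fun k => hw k
  have hQ : ∑ b, Q b = 1 := sum_prod_eq_one (w := fun k : {k // k ∉ s} => w k) fun k => hw k
  have hRS : (∑ a, ∑ b, if R a ∧ S b then P a * Q b else 0)
      = (∑ a, if R a then P a else 0) * ∑ b, if S b then Q b else 0 := by
    simp only [Finset.sum_mul_sum, ite_zero_mul_ite_zero]
  have hR₁ : (∑ a, ∑ b, if R a then P a * Q b else 0) = ∑ a, if R a then P a else 0 := by
    simp only [← ite_zero_mul, ← Finset.mul_sum, hQ, mul_one]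
  have hS₁ : (∑ a, ∑ b, if S b then P a * Q b else 0) = ∑ b, if S b then Q b else 0 := by
    rw [Finset.sum_comm]
    simp only [← mul_ite_zero, ← Finset.sum_mul, hP, one_mul]
  simp only [hR, hS]
  rw [hR₁, hS₁, ← hRS]

end ProductMass

section DependsOn

variable {ι β γ : Type*} {α : ι → Type*} {s : Set ι}

theorem DependsOn.comp_left {f : (Π i, α i) → β} (g : β → γ) (hf : DependsOn f s) :
    DependsOn (g ∘ f) s :=
  fun _ _ h => congrArg g (hf h)

theorem DependsOn.and {E₁ E₂ : (Π i, α i) → Prop} (h₁ : DependsOn E₁ s) (h₂ : DependsOn E₂ s) :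
    DependsOn (fun x => E₁ x ∧ E₂ x) s :=
  fun _ _ h => congrArg₂ And (h₁ h) (h₂ h)

end DependsOn

section Counts

variable {n : ℕ}

theorem zsum_le (y : Fin n → Bool) (j : ℕ) : zsum n y j ≤ j := by
  have : #{k : Fin n | k.1 < j ∧ y k} ≤ j :=
    calc #{k : Fin n | k.1 < j ∧ y k}
        ≤ #{k : Fin n | k.1 < j} := Finset.card_le_card fun k => by simp +contextual
      _ = min n j := Fin.card_filter_val_lt
      _ ≤ j := min_le_right n j
  unfold zsum
  exact_mod_cast this

theorem zsum_eq_sum (y : Fin n → Bool) (j : ℕ) :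
    zsum n y j = ∑ k, if k.1 < j ∧ y k then 1 else 0 := by
  simp only [zsum, Finset.card_filter, Nat.cast_sum, Nat.cast_ite, Nat.cast_one, Nat.cast_zero]

theorem tcnt_eq_sum (y : Fin n → Bool) (i : ℕ) :
    tcnt n y i = ∑ k, if i ≤ k.1 ∧ y k then 1 else 0 := by
  simp only [tcnt, Finset.card_filter, Nat.cast_sum, Nat.cast_ite, Nat.cast_one, Nat.cast_zero]

theorem zsum_succ (y : Fin n → Bool) (j : Fin n) :
    zsum n y (j + 1) = zsum n y j + if y j then 1 else 0 := by
  have : (if y j then 1 else 0 : ℤ) = ∑ k, if k = j ∧ y k then 1 else 0 := by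
    simp [ite_and]
  rw [this, zsum_eq_sum, zsum_eq_sum, ← Finset.sum_add_distrib]
  refine Fintype.sum_congr _ _ fun k => ?_
  have : k.1 < j.1 + 1 ↔ k.1 < j.1 ∨ k = j := by omega
  by_cases hk : k = j <;> simp [hk, this]

theorem zsum_add_tcnt (y : Fin n → Bool) (i : ℕ) : zsum n y i + tcnt n y i = zsum n y n := by
  rw [zsum_eq_sum, zsum_eq_sum, tcnt_eq_sum, ← Finset.sum_add_distrib]
  refine Fintype.sum_congr _ _ fun k => ?_
  have := k.2
  cases y k
  · simp
  · simp only [and_true]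
    split_ifs <;> omega

theorem dependsOn_zsum (j : ℕ) : DependsOn (fun y => zsum n y j) {k : Fin n | k.1 < j} := by
  intro y y' h
  simp only [zsum_eq_sum]
  exact Fintype.sum_congr _ _ fun k => by
    by_cases hk : k.1 < j
    · simp [hk, h k hk]
    · simp [hk]

theorem dependsOn_tcnt (i : ℕ) : DependsOn (fun y => tcnt n y i) {k : Fin n | k.1 < i}ᶜ := by
  intro y y' h
  simp only [tcnt_eq_sum]
  exact Fintype.sum_congr _ _ fun k => by
    by_cases hk : i ≤ k.1
    · simp [hk, h k (by simpa using hk)]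
    · simp [hk]

end Counts

def bernoulliWeight {n : ℕ} (π : ℕ → ℝ) (k : Fin n) (b : Bool) : ℝ :=
  if b then π (k.1 + 1) else 1 - π (k.1 + 1)

theorem sum_bernoulliWeight {n : ℕ} (π : ℕ → ℝ) (k : Fin n) : ∑ b, bernoulliWeight π k b = 1 := by
  simp [bernoulliWeight]

theorem prb_eq_productMass (n : ℕ) (π : ℕ → ℝ) (E : (Fin n → Bool) → Prop) :
    prb n π E = productMass (bernoulliWeight π) E :=
  rfl

theorem prb_eval_and_zsum_eq {n : ℕ} (π : ℕ → ℝ) (n1 : ℤ) (j : Fin n) (b : Bool) :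
    prb n π (fun y => y j = b ∧ zsum n y n = n1)
      = ∑ m ∈ range (j + 1), fwd n π j m * bernoulliWeight π j b *
          bwd n π n1 (j + 1) (m + if b then 1 else 0) := by
  have hw := sum_bernoulliWeight (n := n) π
  have hrange : ∀ y, (zsum n y j).toNat ∈ range (j + 1) := fun y => by
    have := zsum_le y j
    simp only [mem_range]
    omega
  rw [prb_eq_productMass, productMass_eq_sum_fiber _ hrange]
  refine Finset.sum_congr rfl fun m _ => ?_
  -- `y j` is `Y_{j+1}`, and `Z_n = Z_j + Y_{j+1} + (Y_{j+2} + ⋯ + Y_n)`.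
  have hsplit : ∀ y : Fin n → Bool,
      ((zsum n y j).toNat = m ∧ y j = b ∧ zsum n y n = n1) ↔
        (zsum n y j = m ∧ y j = b) ∧ tcnt n y (j + 1) = n1 - (m + if b then 1 else 0) := by
    intro y
    have h₁ := zsum_succ y j
    have h₂ := zsum_add_tcnt y (j + 1)
    have h₃ : 0 ≤ zsum n y j := Int.natCast_nonneg _
    constructor
    · rintro ⟨hm, rfl, hn⟩
      exact ⟨⟨by omega, rfl⟩, by omega⟩
    · rintro ⟨⟨hm, rfl⟩, ht⟩
      exact ⟨by omega, rfl, by omega⟩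
  have hzsum : DependsOn (fun y => zsum n y j = m) {k : Fin n | k.1 < j} :=
    (dependsOn_zsum j).comp_left (· = (m : ℤ))
  have heval (s : Set (Fin n)) (hj : j ∈ s) : DependsOn (fun y : Fin n → Bool => y j = b) s :=
    fun _ _ h => congrArg (· = b) (h j hj)
  have hhead : DependsOn (fun y => zsum n y j = m ∧ y j = b) {k : Fin n | k.1 < j + 1} :=
    .and (hzsum.mono fun _ hk => Nat.lt_succ_of_lt hk) (heval _ (Nat.lt_succ_self j))
  have htail : DependsOn (fun y => tcnt n y (j + 1) = n1 - (m + if b then 1 else 0))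
      {k : Fin n | k.1 < j + 1}ᶜ :=
    (dependsOn_tcnt (j + 1)).comp_left (· = n1 - (m + if b then 1 else 0))
  rw [productMass_congr hsplit, productMass_and_of_dependsOn hw hhead htail,
    productMass_and_of_dependsOn hw hzsum (heval _ (lt_irrefl j.1)), productMass_eval_eq hw]
  rfl

/-- Conditional marginals of phenotype `i` given the constraint, expressed via
sums of forward and backward quantities. -/
theorem conditional_marginals (n : ℕ) (π : ℕ → ℝ) (n1 : ℤ)
    (i : ℕ) (hi1 : 1 ≤ i) (hi2 : i ≤ n) :
    prb n π (fun y => y ⟨i - 1, by omega⟩ = true ∧ zsum n y n = n1) /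
        prb n π (fun y => zsum n y n = n1)
      = (∑ m ∈ Finset.range i, fwd n π (i - 1) (m : ℤ) * π i * bwd n π n1 i ((m : ℤ) + 1)) /
          prb n π (fun y => zsum n y n = n1) ∧
    prb n π (fun y => y ⟨i - 1, by omega⟩ = false ∧ zsum n y n = n1) /
        prb n π (fun y => zsum n y n = n1)
      = (∑ m ∈ Finset.range i, fwd n π (i - 1) (m : ℤ) * (1 - π i) * bwd n π n1 i (m : ℤ)) /
          prb n π (fun y => zsum n y n = n1) := by
  have key := prb_eval_and_zsum_eq π n1 (⟨i - 1, by omega⟩ : Fin n)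
  have hi : i - 1 + 1 = i := by omega
  rw [key true, key false]
  simp [bernoulliWeight, hi]
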